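/- arXiv:2011.11793 — 2 statements merged into one kernel-verified Lean document; each statement's English description precedes it below -/
import Mathlib

section
/- A lattice (viewed as a poset) is quasi-projective if and only if it is a chain. -/
def IsQuasiProjectivePoset (L : Type) [PartialOrder L] : Prop :=
  ∀ (T : Type) (_ : PartialOrder T) (f j : L → T),
    Monotone f → Monotone j → Function.Surjective j →
      ∃ φ : L → L, Monotone φ ∧ j ∘ φ = f

/-!
For a chain `L`, any section `s` of a monotone surjection `j : L → T` is monotone, so `φ := s ∘ f`
works.

Conversely, take a linear extension `j : L → T` of a lattice `L` (a monotone bijection) and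
incomparable `a, b` with `j b ≤ j a`. Quasi-projectivity makes `φ = j⁻¹ ∘ f` monotone for every
monotone `f`, so every `g : L → L` with `j ∘ g` monotone is itself monotone. The map `g` sending
`b ↦ a`, everything strictly below `b` to `b` and every other `x` to `x ⊔ a ⊔ b` breaks only the
relation `a ⊓ b < b`, where it gives `b ≤ a`; the linear extension does not see this, since there
`j b ≤ j a`.
-/

theorem Monotone.of_rightInverse_of_total {L T : Type} [Preorder L] [PartialOrder T]
    (htotal : ∀ a b : L, a ≤ b ∨ b ≤ a) {j : L → T} (hj : Monotone j) {s : T → L}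
    (hs : Function.RightInverse s j) : Monotone s := by
  intro t t' htt'
  rcases htotal (s t) (s t') with hst | hst
  · exact hst
  · have ht't : t' ≤ t := by simpa only [hs _] using hj hst
    rw [le_antisymm htt' ht't]

theorem isQuasiProjectivePoset_of_total {L : Type} [PartialOrder L]
    (htotal : ∀ a b : L, a ≤ b ∨ b ≤ a) : IsQuasiProjectivePoset L := by
  intro T _ f j hf hj hjsurj
  refine ⟨Function.surjInv hjsurj ∘ f, ?_, ?_⟩
  · exact (Monotone.of_rightInverse_of_total htotal hj (Function.rightInverse_surjInv _)).comp hf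
  · funext x
    exact Function.rightInverse_surjInv hjsurj (f x)

theorem IsQuasiProjectivePoset.monotone_of_monotone_comp {L T : Type} [PartialOrder L]
    [PartialOrder T] (hL : IsQuasiProjectivePoset L) {j : L → T} (hj : Monotone j)
    (hjbij : Function.Bijective j) {g : L → L} (hjg : Monotone (j ∘ g)) : Monotone g := by
  obtain ⟨φ, hφ, hjφ⟩ := hL T inferInstance (j ∘ g) j hjg hj hjbij.surjective
  rwa [← hjbij.injective.comp_left hjφ]

section Lattice

variable {L : Type} [Lattice L]

open Classical in
noncomputable def swapBelow (a b : L) (x : L) : L :=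
  if x = b then a else if x < b then b else x ⊔ (a ⊔ b)

theorem not_monotone_swapBelow {a b : L} (hba : ¬ b ≤ a) : ¬ Monotone (swapBelow a b) := by
  intro hmono
  have hlt : a ⊓ b < b := inf_lt_right.mpr hba
  have h := hmono hlt.le
  simp only [swapBelow, hlt.ne, hlt, if_true, if_false] at h
  exact hba h

theorem Monotone.comp_swapBelow {T : Type} [Preorder T] {j : L → T} (hj : Monotone j) {a b : L}
    (hjba : j b ≤ j a) : Monotone (j ∘ swapBelow a b) := by
  intro x y hxy
  have hab_le_sup : a ⊔ b ≤ y ⊔ (a ⊔ b) := le_sup_right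
  by_cases hxb : x = b
  · subst hxb
    rcases hxy.eq_or_lt with rfl | hxy
    · exact le_rfl
    · simp only [Function.comp, swapBelow, if_pos, hxy.ne', hxy.not_gt, if_false]
      exact hj (le_sup_left.trans hab_le_sup)
  by_cases hxlt : x < b
  · rcases eq_or_ne y b with rfl | hyb
    · simpa [swapBelow, hxlt, hxlt.ne] using hjba
    by_cases hylt : y < b
    · simp [swapBelow, hxb, hxlt, hyb, hylt]
    · simp only [Function.comp, swapBelow, hxb, hxlt, hyb, hylt, if_true, if_false]
      exact hj (le_sup_right.trans hab_le_sup)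
  · have hyb : y ≠ b := fun hyb => hxlt (lt_of_le_of_ne (hyb ▸ hxy) hxb)
    have hylt : ¬ y < b := fun hylt => hxlt (hxy.trans_lt hylt)
    simp only [Function.comp, swapBelow, hxb, hxlt, hyb, hylt, if_false]
    exact hj (sup_le_sup_right hxy _)

end Lattice

theorem IsQuasiProjectivePoset.total {L : Type} [Lattice L] (hL : IsQuasiProjectivePoset L)
    (a b : L) : a ≤ b ∨ b ≤ a := by
  have hbij : Function.Bijective (toLinearExtension : L → LinearExtension L) :=
    ⟨fun _ _ h => h, fun t => ⟨t, rfl⟩⟩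
  have not_lin_le : ∀ {a b : L}, ¬ b ≤ a → ¬ toLinearExtension b ≤ toLinearExtension a :=
    fun hba hlin => not_monotone_swapBelow hba <| hL.monotone_of_monotone_comp
      toLinearExtension.monotone hbij (toLinearExtension.monotone.comp_swapBelow hlin)
  by_contra! hab
  rcases le_total (toLinearExtension b) (toLinearExtension a) with hlin | hlin
  exacts [not_lin_le hab.2 hlin, not_lin_le hab.1 hlin]

theorem lattice_quasiProjective_iff_chain (L : Type) [Lattice L] :
    IsQuasiProjectivePoset L ↔ ∀ a b : L, a ≤ b ∨ b ≤ a :=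
  ⟨IsQuasiProjectivePoset.total, isQuasiProjectivePoset_of_total⟩
end

section
/- In a quasi-projective graph with loops allowed having no edges between distinct vertices, if some vertex has a loop then every vertex has a loop. -/
/-- A graph with loops allowed `(V, E)` (with `E` symmetric) is quasi-projective
if for every such graph `(W, F)`, every homomorphism `f` and every surjective
homomorphism `j` from `(V, E)` to `(W, F)`, there is an endomorphism `φ` of
`(V, E)` with `j ∘ φ = f`. -/
def IsQuasiProjectiveLoopGraph {V : Type} (E : V → V → Prop) : Prop :=
  ∀ (W : Type) (F : W → W → Prop), Symmetric F →
    ∀ f j : V → W, (∀ x y, E x y → F (f x) (f y)) → (∀ x y, E x y → F (j x) (j y)) →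
      Function.Surjective j →
        ∃ φ : V → V, (∀ x y, E x y → E (φ x) (φ y)) ∧ j ∘ φ = f

/-- Lift `g` along `j = id` into the complete graph with loops on `V`, where every map is a
homomorphism. -/
theorem IsQuasiProjectiveLoopGraph.map_rel {V : Type} {E : V → V → Prop}
    (hqp : IsQuasiProjectiveLoopGraph E) (g : V → V) {x y : V} (hxy : E x y) :
    E (g x) (g y) := by
  obtain ⟨φ, hφ, hφg⟩ := hqp V (fun _ _ => True) (fun _ _ _ => trivial) g id
    (fun _ _ _ => trivial) (fun _ _ _ => trivial) Function.surjective_id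
  subst hφg
  exact hφ x y hxy

theorem loop_graph_qp_eempty_loops_general {V : Type} (E : V → V → Prop)
    (hqp : IsQuasiProjectiveLoopGraph E)
    (hloop : ∃ v : V, E v v) :
    ∀ v : V, E v v := by
  obtain ⟨v₀, hv₀⟩ := hloop
  exact fun v => hqp.map_rel (fun _ => v) hv₀

/-- In a quasi-projective graph with loops allowed having no edges between
distinct vertices, if some vertex has a loop then every vertex has a loop. -/
theorem loop_graph_qp_eempty_loops {V : Type} (E : V → V → Prop)
    (hsymm : Symmetric E) (hqp : IsQuasiProjectiveLoopGraph E)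
    (heempty : ∀ x y : V, x ≠ y → ¬ E x y)
    (hloop : ∃ v : V, E v v) :
    ∀ v : V, E v v :=
  loop_graph_qp_eempty_loops_general E hqp hloop
end
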